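/- Let U be a smooth vector field and a, θ smooth scalar fields on ℝ³×ℝ with ∂ₜθ + U·∇θ = 0 and ∂ₜa + U·∇a = ψ for some smooth scalar field ψ. Then B = ∇a × ∇θ satisfies ∂ₜB − curl(U × B) = ∇ψ × ∇θ. -/

import Mathlib

open Matrix

noncomputable section

abbrev V3 := Fin 3 → ℝ

/-- Partial derivative in spatial direction `i`. -/
noncomputable def pd (i : Fin 3) (f : V3 → ℝ) (x : V3) : ℝ :=
  fderiv ℝ f x (Pi.single i 1)

/-- Gradient of a scalar field. -/
noncomputable def grad (f : V3 → ℝ) (x : V3) : V3 := fun i => pd i f x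

/-- Divergence of a vector field. -/
noncomputable def div3 (u : V3 → V3) (x : V3) : ℝ :=
  ∑ i, pd i (fun y => u y i) x

/-- Curl of a vector field. -/
noncomputable def curl3 (u : V3 → V3) (x : V3) : V3 :=
  ![pd 1 (fun y => u y 2) x - pd 2 (fun y => u y 1) x,
    pd 2 (fun y => u y 0) x - pd 0 (fun y => u y 2) x,
    pd 0 (fun y => u y 1) x - pd 1 (fun y => u y 0) x]

/-- Laplacian of a scalar field. -/
noncomputable def lap (f : V3 → ℝ) (x : V3) : ℝ := ∑ i, pd i (pd i f) x

/-- Componentwise Laplacian of a vector field. -/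
noncomputable def lapV (u : V3 → V3) (x : V3) : V3 := fun j => lap (fun y => u y j) x

/-- Euclidean dot product on `V3`. -/
noncomputable def dot3 (v w : V3) : ℝ := ∑ i, v i * w i

/-- Time derivative of a space-time scalar field `f : V3 → ℝ → ℝ`. -/
noncomputable def pdt (f : V3 → ℝ → ℝ) (x : V3) (t : ℝ) : ℝ := deriv (f x) t

/-- Smoothness of a space-time field. -/
def SmoothST {E : Type*} [NormedAddCommGroup E] [NormedSpace ℝ E]
    (f : V3 → ℝ → E) : Prop :=
  ContDiff ℝ (⊤ : ℕ∞) (fun p : V3 × ℝ => f p.1 p.2)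

lemma slice_cd {E : Type*} [NormedAddCommGroup E] [NormedSpace ℝ E]
    {f : V3 → ℝ → E} (hf : SmoothST f) (t : ℝ) : ContDiff ℝ (⊤ : ℕ∞) (fun y => f y t) :=
  hf.comp (contDiff_id.prodMk contDiff_const)

lemma pd_cd {f : V3 → ℝ} (hf : ContDiff ℝ (⊤ : ℕ∞) f) (i : Fin 3) :
    ContDiff ℝ (⊤ : ℕ∞) (fun y => pd i f y) :=
  (hf.fderiv_right (by simp)).clm_apply contDiff_const

lemma pd_congr {f g : V3 → ℝ} (h : ∀ y, f y = g y) (i : Fin 3) (x : V3) :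
    pd i f x = pd i g x := by
  have : f = g := funext h
  rw [this]

lemma pd_mul {f g : V3 → ℝ} {x : V3} (hf : DifferentiableAt ℝ f x)
    (hg : DifferentiableAt ℝ g x) (i : Fin 3) :
    pd i (fun y => f y * g y) x = pd i f x * g x + f x * pd i g x := by
  simp [pd, fderiv_fun_mul hf hg]; ring

lemma pd_sub {f g : V3 → ℝ} {x : V3} (hf : DifferentiableAt ℝ f x)
    (hg : DifferentiableAt ℝ g x) (i : Fin 3) :
    pd i (fun y => f y - g y) x = pd i f x - pd i g x := by
  simp [pd, fderiv_fun_sub hf hg]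

lemma pd_add {f g : V3 → ℝ} {x : V3} (hf : DifferentiableAt ℝ f x)
    (hg : DifferentiableAt ℝ g x) (i : Fin 3) :
    pd i (fun y => f y + g y) x = pd i f x + pd i g x := by
  simp [pd, fderiv_fun_add hf hg]

lemma pd_neg {f : V3 → ℝ} {x : V3} (i : Fin 3) :
    pd i (fun y => -f y) x = -pd i f x := by
  simp [pd, fderiv_neg]

lemma pd_comm {f : V3 → ℝ} (hf : ContDiff ℝ (⊤ : ℕ∞) f) (i j : Fin 3) (x : V3) :
    pd i (fun y => pd j f y) x = pd j (fun y => pd i f y) x := by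
  have hd : ∀ y, HasFDerivAt f (fderiv ℝ f y) y := fun y =>
    (hf.differentiable (by simp) y).hasFDerivAt
  have h2 : HasFDerivAt (fderiv ℝ f) (fderiv ℝ (fderiv ℝ f) x) x :=
    (((hf.fderiv_right (m := (⊤ : ℕ∞)) (by simp)).differentiable (by simp)) x).hasFDerivAt
  have hsym := second_derivative_symmetric hd h2
  have key : ∀ k l : Fin 3, pd k (fun y => pd l f y) x
      = fderiv ℝ (fderiv ℝ f) x (Pi.single k 1) (Pi.single l 1) := by
    intro k l
    have h3 : HasFDerivAt (fun y => pd l f y)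
        (((fderiv ℝ f x).comp (0 : V3 →L[ℝ] V3)) + (fderiv ℝ (fderiv ℝ f) x).flip (Pi.single l 1)) x :=
      h2.clm_apply (hasFDerivAt_const (Pi.single l 1) x)
    simp only [pd] at h3 ⊢
    rw [h3.fderiv]
    simp
  rw [key i j, key j i, hsym]

lemma hasDerivAt_pd_t {f : V3 → ℝ → ℝ} (hf : SmoothST f) (x : V3) (t : ℝ) (j : Fin 3) :
    HasDerivAt (fun s => pd j (fun y => f y s) x)
      (pd j (fun y => deriv (f y) t) x) t := by
  set F : V3 × ℝ → ℝ := fun p => f p.1 p.2 with hF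
  have hFc : ContDiff ℝ (⊤ : ℕ∞) F := hf
  have hFd : Differentiable ℝ F := hFc.differentiable (by simp)
  set G := fderiv ℝ F with hG
  have hGc : ContDiff ℝ (⊤ : ℕ∞) G := hFc.fderiv_right (by simp)
  have hGd : Differentiable ℝ G := hGc.differentiable (by simp)
  set H := fderiv ℝ G (x, t) with hH
  have step1 : ∀ (y : V3) (s : ℝ), pd j (fun y' => f y' s) y = G (y, s) (Pi.single j 1, 0) := by
    intro y s
    have h1 : HasFDerivAt (fun y' : V3 => F (y', s))
        ((G (y, s)).comp (ContinuousLinearMap.inl ℝ V3 ℝ)) y :=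
      by have := (hFd (y, s)).hasFDerivAt.comp y (hasFDerivAt_prodMk_left (𝕜 := ℝ) y s); exact this
    simp only [pd]
    rw [h1.fderiv]
    rfl
  have step2 : ∀ (y : V3) (s : ℝ), deriv (f y) s = G (y, s) (0, 1) := by
    intro y s
    have hcurve : HasDerivAt (fun r : ℝ => ((y : V3), r)) ((0 : V3), (1 : ℝ)) s :=
      (hasDerivAt_const s y).prodMk (hasDerivAt_id s)
    have h1 : HasDerivAt (fun r => F (y, r)) (G (y, s) ((0 : V3), (1 : ℝ))) s :=
      (hFd (y, s)).hasFDerivAt.comp_hasDerivAt s hcurve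
    exact h1.deriv
  have hcurve : HasDerivAt (fun r : ℝ => ((x : V3), r)) ((0 : V3), (1 : ℝ)) t :=
    (hasDerivAt_const t x).prodMk (hasDerivAt_id t)
  have h3 : HasDerivAt (fun s => G (x, s)) (H ((0 : V3), (1 : ℝ))) t :=
    (hGd (x, t)).hasFDerivAt.comp_hasDerivAt t hcurve
  have h4 : HasDerivAt (fun s => G (x, s) ((Pi.single j 1 : V3), (0 : ℝ)))
      (H ((0 : V3), (1 : ℝ)) ((Pi.single j 1 : V3), (0 : ℝ))
        + G (x, t) 0) t :=
    h3.clm_apply (hasDerivAt_const t _)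
  rw [map_zero, add_zero] at h4
  have step4 : pd j (fun y => deriv (f y) t) x
      = H ((Pi.single j 1 : V3), (0 : ℝ)) ((0 : V3), (1 : ℝ)) := by
    have heq : (fun y => deriv (f y) t) = fun y => G (y, t) ((0 : V3), (1 : ℝ)) :=
      funext fun y => step2 y t
    have h5 : HasFDerivAt (fun y : V3 => G (y, t))
        (H.comp (ContinuousLinearMap.inl ℝ V3 ℝ)) x :=
      (hGd (x, t)).hasFDerivAt.comp x (hasFDerivAt_prodMk_left (𝕜 := ℝ) x t)
    have h6 := h5.clm_apply (hasFDerivAt_const ((0 : V3), (1 : ℝ)) x)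
    simp only [pd, heq]
    rw [h6.fderiv]
    simp
  have hsym := second_derivative_symmetric (fun p => (hFd p).hasFDerivAt)
    (hGd (x, t)).hasFDerivAt ((Pi.single j 1 : V3), (0 : ℝ)) ((0 : V3), (1 : ℝ))
  have hsym' : H ((Pi.single j 1 : V3), (0 : ℝ)) ((0 : V3), (1 : ℝ))
      = H ((0 : V3), (1 : ℝ)) ((Pi.single j 1 : V3), (0 : ℝ)) := hsym
  have hfun : (fun s => pd j (fun y => f y s) x)
      = fun s => G (x, s) ((Pi.single j 1 : V3), (0 : ℝ)) :=
    funext fun s => step1 x s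
  rw [hfun, step4, hsym']
  exact h4

theorem clebsch_forced_stretching (U : V3 → ℝ → V3) (a θ ψ : V3 → ℝ → ℝ)
    (hU : SmoothST U) (ha : SmoothST a) (hθ : SmoothST θ) (hψ : SmoothST ψ)
    (hadvθ : ∀ x t, pdt θ x t + dot3 (U x t) (grad (fun y => θ y t) x) = 0)
    (hadva : ∀ x t, pdt a x t + dot3 (U x t) (grad (fun y => a y t) x) = ψ x t) :
    ∀ x t, ∀ i : Fin 3,
      deriv (fun s => (grad (fun y => a y s) x ⨯₃ grad (fun y => θ y s) x) i) t
        - curl3 (fun y => U y t ⨯₃ (grad (fun z => a z t) y ⨯₃ grad (fun z => θ z t) y)) x i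
        = (grad (fun y => ψ y t) x ⨯₃ grad (fun y => θ y t) x) i := by
  intro x t i
  have hA : ContDiff ℝ (⊤ : ℕ∞) (fun z => a z t) := slice_cd ha t
  have hT : ContDiff ℝ (⊤ : ℕ∞) (fun z => θ z t) := slice_cd hθ t
  have hP : ContDiff ℝ (⊤ : ℕ∞) (fun z => ψ z t) := slice_cd hψ t
  have hu : ∀ p : Fin 3, ContDiff ℝ (⊤ : ℕ∞) (fun z => U z t p) := fun p =>
    (ContinuousLinearMap.proj (R := ℝ) (φ := fun _ : Fin 3 => ℝ) p).contDiff.comp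
      (slice_cd hU t)
  have dd : ∀ {f : V3 → ℝ}, ContDiff ℝ (⊤ : ℕ∞) f → DifferentiableAt ℝ f x := fun h =>
    (h.differentiable (by simp)).differentiableAt
  have cA : ∀ k : Fin 3, ContDiff ℝ (⊤ : ℕ∞) (fun y => pd k (fun z => a z t) y) :=
    fun k => pd_cd hA k
  have cT : ∀ k : Fin 3, ContDiff ℝ (⊤ : ℕ∞) (fun y => pd k (fun z => θ z t) y) :=
    fun k => pd_cd hT k
  have cB : ∀ k l : Fin 3, ContDiff ℝ (⊤ : ℕ∞)
      (fun y => pd k (fun z => a z t) y * pd l (fun z => θ z t) y) :=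
    fun k l => (cA k).mul (cT l)
  have cBd : ∀ k l : Fin 3, ContDiff ℝ (⊤ : ℕ∞)
      (fun y => pd k (fun z => a z t) y * pd l (fun z => θ z t) y
        - pd l (fun z => a z t) y * pd k (fun z => θ z t) y) :=
    fun k l => (cB k l).sub (cB l k)
  have cW : ∀ p k l : Fin 3, ContDiff ℝ (⊤ : ℕ∞)
      (fun y => U y t p * (pd k (fun z => a z t) y * pd l (fun z => θ z t) y
        - pd l (fun z => a z t) y * pd k (fun z => θ z t) y)) :=
    fun p k l => (hu p).mul (cBd k l)
  have hsa : ∀ j : Fin 3, HasDerivAt (fun s => pd j (fun y => a y s) x)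
      (pd j (fun y => deriv (a y) t) x) t := fun j => hasDerivAt_pd_t ha x t j
  have hst : ∀ j : Fin 3, HasDerivAt (fun s => pd j (fun y => θ y s) x)
      (pd j (fun y => deriv (θ y) t) x) t := fun j => hasDerivAt_pd_t hθ x t j
  have hderiv : ∀ j k : Fin 3,
      deriv (fun s => pd j (fun y => a y s) x * pd k (fun y => θ y s) x
        - pd k (fun y => a y s) x * pd j (fun y => θ y s) x) t
      = (pd j (fun y => deriv (a y) t) x * pd k (fun z => θ z t) x
          + pd j (fun z => a z t) x * pd k (fun y => deriv (θ y) t) x)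
        - (pd k (fun y => deriv (a y) t) x * pd j (fun z => θ z t) x
          + pd k (fun z => a z t) x * pd j (fun y => deriv (θ y) t) x) :=
    fun j k => (((hsa j).mul (hst k)).sub ((hsa k).mul (hst j))).deriv
  have hpta : ∀ y, deriv (a y) t = ψ y t
      - (U y t 0 * pd 0 (fun z => a z t) y + U y t 1 * pd 1 (fun z => a z t) y
        + U y t 2 * pd 2 (fun z => a z t) y) := by
    intro y
    have h := hadva y t
    simp only [pdt, dot3, grad, Fin.sum_univ_three] at h
    linarith
  have hptt : ∀ y, deriv (θ y) t = -(U y t 0 * pd 0 (fun z => θ z t) y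
      + U y t 1 * pd 1 (fun z => θ z t) y + U y t 2 * pd 2 (fun z => θ z t) y) := by
    intro y
    have h := hadvθ y t
    simp only [pdt, dot3, grad, Fin.sum_univ_three] at h
    linarith
  have hEa : ∀ j : Fin 3, pd j (fun y => deriv (a y) t) x
      = pd j (fun z => ψ z t) x
        - ((pd j (fun z => U z t 0) x * pd 0 (fun z => a z t) x
            + U x t 0 * pd j (fun y => pd 0 (fun z => a z t) y) x)
          + (pd j (fun z => U z t 1) x * pd 1 (fun z => a z t) x
            + U x t 1 * pd j (fun y => pd 1 (fun z => a z t) y) x)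
          + (pd j (fun z => U z t 2) x * pd 2 (fun z => a z t) x
            + U x t 2 * pd j (fun y => pd 2 (fun z => a z t) y) x)) := by
    intro j
    rw [pd_congr hpta j x,
      pd_sub (dd hP) (dd ((((hu 0).mul (cA 0)).add ((hu 1).mul (cA 1))).add
        ((hu 2).mul (cA 2)))),
      pd_add (dd (((hu 0).mul (cA 0)).add ((hu 1).mul (cA 1)))) (dd ((hu 2).mul (cA 2))),
      pd_add (dd ((hu 0).mul (cA 0))) (dd ((hu 1).mul (cA 1))),
      pd_mul (dd (hu 0)) (dd (cA 0)), pd_mul (dd (hu 1)) (dd (cA 1)),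
      pd_mul (dd (hu 2)) (dd (cA 2))]
  have hEt : ∀ j : Fin 3, pd j (fun y => deriv (θ y) t) x
      = -((pd j (fun z => U z t 0) x * pd 0 (fun z => θ z t) x
            + U x t 0 * pd j (fun y => pd 0 (fun z => θ z t) y) x)
          + (pd j (fun z => U z t 1) x * pd 1 (fun z => θ z t) x
            + U x t 1 * pd j (fun y => pd 1 (fun z => θ z t) y) x)
          + (pd j (fun z => U z t 2) x * pd 2 (fun z => θ z t) x
            + U x t 2 * pd j (fun y => pd 2 (fun z => θ z t) y) x)) := by
    intro j
    rw [pd_congr hptt j x, pd_neg,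
      pd_add (dd (((hu 0).mul (cT 0)).add ((hu 1).mul (cT 1)))) (dd ((hu 2).mul (cT 2))),
      pd_add (dd ((hu 0).mul (cT 0))) (dd ((hu 1).mul (cT 1))),
      pd_mul (dd (hu 0)) (dd (cT 0)), pd_mul (dd (hu 1)) (dd (cT 1)),
      pd_mul (dd (hu 2)) (dd (cT 2))]
  fin_cases i <;>
  · simp only [curl3, grad, cross_apply, Matrix.cons_val_zero, Matrix.cons_val_one,
      Matrix.head_cons, Matrix.cons_val_two, Matrix.tail_cons, Fin.reduceFinMk,
      Fin.mk_zero, Fin.mk_one, Fin.isValue]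
    simp only [hderiv, hEa, hEt,
      pd_sub (dd (cW 1 0 1)) (dd (cW 2 2 0)), pd_sub (dd (cW 2 1 2)) (dd (cW 0 0 1)), pd_sub (dd (cW 0 2 0)) (dd (cW 1 1 2)),
      pd_mul (dd (hu 0)) (dd (cBd 1 2)), pd_mul (dd (hu 0)) (dd (cBd 2 0)), pd_mul (dd (hu 0)) (dd (cBd 0 1)), pd_mul (dd (hu 1)) (dd (cBd 1 2)), pd_mul (dd (hu 1)) (dd (cBd 2 0)), pd_mul (dd (hu 1)) (dd (cBd 0 1)), pd_mul (dd (hu 2)) (dd (cBd 1 2)), pd_mul (dd (hu 2)) (dd (cBd 2 0)), pd_mul (dd (hu 2)) (dd (cBd 0 1)),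
      pd_sub (dd (cB 1 2)) (dd (cB 2 1)), pd_sub (dd (cB 2 0)) (dd (cB 0 2)), pd_sub (dd (cB 0 1)) (dd (cB 1 0)),
      pd_mul (dd (cA 0)) (dd (cT 0)), pd_mul (dd (cA 0)) (dd (cT 1)), pd_mul (dd (cA 0)) (dd (cT 2)), pd_mul (dd (cA 1)) (dd (cT 0)), pd_mul (dd (cA 1)) (dd (cT 1)), pd_mul (dd (cA 1)) (dd (cT 2)), pd_mul (dd (cA 2)) (dd (cT 0)), pd_mul (dd (cA 2)) (dd (cT 1)), pd_mul (dd (cA 2)) (dd (cT 2))]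
    simp only [pd_comm hA 1 0 x, pd_comm hA 2 0 x, pd_comm hA 2 1 x,
      pd_comm hT 1 0 x, pd_comm hT 2 0 x, pd_comm hT 2 1 x]
    ring
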